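/- arXiv:1312.6093 — 7 statements merged into one kernel-verified Lean document; each statement's English description precedes it below -/
import Mathlib

section
/- Let k ≥ 1, let x_1, ..., x_k be pairwise distinct reals, and let j ≥ 0. Then for all x ∈ ℝ, x^{k+j} - ∑_{l=1}^{k} x_l^{k+j} ∏_{r≠l} (x - x_r)/(x_l - x_r) = ∏_{r=1}^{k}(x - x_r) · ∑_{i=0}^{j} ( ∑_{l=1}^{k} x_l^{k+j-1-i} / ∏_{r≠l}(x_l - x_r) ) x^i. -/
/-!
Split `x_l^(k+j) = x_l^(k-1) * x_l^(j+1)` and use `t^(j+1) - x_l^(j+1) = (t - x_l) ∑ t^i x_l^(j-i)`: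
the factor `t - x_l` completes the numerator of the `l`-th Lagrange basis polynomial to
`∏ r, (t - x r)`. What is left is `t^(j+1)` times the interpolant of `t^(k-1)` at `k` nodes,
which is exact.
-/

open Finset

section Lagrange

variable {F ι : Type*} [Field F] [DecidableEq ι] {s : Finset ι} {x : ι → F}

theorem sum_pow_mul_prod_div_eq_pow (hx : Set.InjOn x s) {m : ℕ} (hm : m < #s) (t : F) :
    ∑ l ∈ s, x l ^ m * ∏ r ∈ s.erase l, (t - x r) / (x l - x r) = t ^ m := by
  have h := congrArg (Polynomial.eval t)
    (Lagrange.eq_interpolate (f := Polynomial.X ^ m) hx (by simpa using hm))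
  simpa [Lagrange.interpolate_apply, Lagrange.basis, Lagrange.basisDivisor,
    Polynomial.eval_finsetSum, Polynomial.eval_prod, div_eq_inv_mul] using h.symm

theorem pow_mul_prod_div_add_prod_mul_sum {l : ι} (hl : l ∈ s) (m j : ℕ) (t : F) :
    x l ^ (m + j + 1) * ∏ r ∈ s.erase l, (t - x r) / (x l - x r)
        + (∏ r ∈ s, (t - x r)) *
          ∑ i ∈ range (j + 1), (x l ^ (m + j - i) / ∏ r ∈ s.erase l, (x l - x r)) * t ^ i
      = t ^ (j + 1) * (x l ^ m * ∏ r ∈ s.erase l, (t - x r) / (x l - x r)) := by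
  have hsum : ∑ i ∈ range (j + 1), (x l ^ (m + j - i) / ∏ r ∈ s.erase l, (x l - x r)) * t ^ i
      = x l ^ m / (∏ r ∈ s.erase l, (x l - x r)) *
          ∑ i ∈ range (j + 1), t ^ i * x l ^ (j - i) := by
    rw [mul_sum]
    refine sum_congr rfl fun i hi => ?_
    rw [Nat.add_sub_assoc (Nat.lt_succ_iff.mp (mem_range.mp hi)), pow_add]
    ring
  have hgeom := geom_sum₂_mul t (x l) (j + 1)
  rw [Nat.add_sub_cancel] at hgeom
  rw [hsum, prod_div_distrib, ← mul_prod_erase s _ hl]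
  linear_combination
    (x l ^ m * (∏ r ∈ s.erase l, (t - x r)) / ∏ r ∈ s.erase l, (x l - x r)) * hgeom

end Lagrange

/-- For `k ≥ 1` pairwise distinct reals `x 0, …, x (k-1)`, `j ≥ 0` and all `t`,
the monomial `t^(k+j)` minus its Lagrange interpolation polynomial at the nodes
factors as `∏ r (t - x r)` times an explicit polynomial of degree `j`. -/
theorem stmt_7 (k : ℕ) (hk : 1 ≤ k) (x : Fin k → ℝ) (hx : Function.Injective x)
    (j : ℕ) (t : ℝ) :
    t ^ (k + j) - ∑ l : Fin k, x l ^ (k + j) * ∏ r ∈ univ.erase l, (t - x r) / (x l - x r)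
      = (∏ r : Fin k, (t - x r)) *
          ∑ i ∈ range (j + 1),
            (∑ l : Fin k, x l ^ (k + j - 1 - i) / ∏ r ∈ univ.erase l, (x l - x r)) * t ^ i := by
  obtain ⟨m, rfl⟩ : ∃ m, k = m + 1 := ⟨k - 1, by omega⟩
  simp only [Nat.add_right_comm m 1 j, Nat.add_sub_cancel, sum_mul]
  rw [sum_comm, mul_sum, eq_comm, eq_sub_iff_add_eq', ← sum_add_distrib,
    sum_congr rfl fun l _ => pow_mul_prod_div_add_prod_mul_sum (mem_univ l) m j t, ← mul_sum,
    sum_pow_mul_prod_div_eq_pow hx.injOn (by simp), ← pow_add]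
  ring
end

section
/- Let f : ℝ → ℝ be continuous and nonnegative, let m ≥ 1, and let x_1 < ... < x_m be real numbers. Then there exists a unique F ∈ C^m(ℝ) with F^(m) = f such that (-1)^{m+1-k} F(x) ≥ 0 for all x in J_k and all 1 ≤ k ≤ m+1, where J_1 = (-∞, x_1], J_k = (x_{k-1}, x_k] for 2 ≤ k ≤ m, and J_{m+1} = (x_m, ∞). -/
/-!
If `G ∈ C^m` vanishes at distinct nodes `x₁, …, x_m`, then for every `t` there is `ξ` with
`G t = G^(m)(ξ) / m! · ∏ₖ (t - xₖ)`: for `t` off the nodes, subtracting the multiple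
`c · ∏ₖ (· - xₖ)` that agrees with `G` at `t` leaves a function with `m + 1` zeros, so by
repeated Rolle its `m`-th derivative `G^(m) - c · m!` has a zero.

Existence: an `m`-fold primitive of `f` minus its Lagrange interpolant at the nodes satisfies
`F^(m) = f ≥ 0` and vanishes at the nodes, so the formula gives the sign condition.
Uniqueness: a solution must vanish at each node, since the node is a simple zero of the product;
the difference of two solutions then has zero `m`-th derivative and vanishes at the nodes, so
the formula makes it zero.
-/

open Finset
open scoped Nat Polynomial

theorem Polynomial.iteratedDeriv_eval {𝕜 : Type*} [NontriviallyNormedField 𝕜] (p : 𝕜[X])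
    (n : ℕ) : iteratedDeriv n (fun t => p.eval t) = fun t => (derivative^[n] p).eval t := by
  induction n generalizing p with
  | zero => rfl
  | succ n ih =>
    have hderiv : deriv (fun t => p.eval t) = fun t => p.derivative.eval t := by
      funext t; exact p.deriv
    rw [iteratedDeriv_succ', hderiv, ih, Function.iterate_succ_apply]

theorem Polynomial.iterate_derivative_of_natDegree_le {R : Type*} [Semiring R] {p : R[X]}
    {n : ℕ} (hp : p.natDegree ≤ n) : derivative^[n] p = C (n ! * p.coeff n) := by
  rw [eq_C_of_natDegree_le_zero ((natDegree_iterate_derivative p n).trans (by omega)),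
    coeff_iterate_derivative, zero_add, Nat.descFactorial_self, nsmul_eq_mul]

theorem iteratedDeriv_prod_sub {m : ℕ} (x : Fin m → ℝ) (t : ℝ) :
    iteratedDeriv m (fun s => ∏ k, (s - x k)) t = m ! := by
  have hdeg : (Lagrange.nodal univ x).natDegree = m := by simp [Lagrange.natDegree_nodal]
  have hlead : (Lagrange.nodal univ x).coeff m = 1 := by
    have := Lagrange.nodal_monic (s := univ) (v := x)
    rwa [Polynomial.Monic, Polynomial.leadingCoeff, hdeg] at this
  simp only [← Lagrange.eval_nodal, Polynomial.iteratedDeriv_eval]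
  rw [Polynomial.iterate_derivative_of_natDegree_le hdeg.le, hlead, mul_one, Polynomial.eval_C]

theorem exists_iteratedDeriv_eq_zero_of_strictMono {n : ℕ} {f : ℝ → ℝ} (hf : ContDiff ℝ n f)
    {x : Fin (n + 1) → ℝ} (hx : StrictMono x) (hfx : ∀ i, f (x i) = 0) :
    ∃ ξ, iteratedDeriv n f ξ = 0 := by
  induction n generalizing f with
  | zero => exact ⟨x 0, by simpa using hfx 0⟩
  | succ n ih =>
    have rolle : ∀ i : Fin (n + 1), ∃ z ∈ Set.Ioo (x i.castSucc) (x i.succ), deriv f z = 0 :=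
      fun i => exists_deriv_eq_zero (hx i.castSucc_lt_succ) hf.continuous.continuousOn
        (by rw [hfx, hfx])
    choose z hz hfz using rolle
    have hz_mono : StrictMono z := Fin.strictMono_iff_lt_succ.mpr fun i =>
      calc z i.castSucc < x i.castSucc.succ := (hz _).2
        _ = x i.succ.castSucc := by rw [Fin.succ_castSucc]
        _ < z i.succ := (hz _).1
    obtain ⟨ξ, hξ⟩ := ih hf.deriv' hz_mono hfz
    exact ⟨ξ, by rwa [iteratedDeriv_succ']⟩

theorem exists_iteratedDeriv_eq_zero_of_injective {n : ℕ} {f : ℝ → ℝ} (hf : ContDiff ℝ n f)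
    {x : Fin (n + 1) → ℝ} (hx : Function.Injective x) (hfx : ∀ i, f (x i) = 0) :
    ∃ ξ, iteratedDeriv n f ξ = 0 := by
  have hcard : (univ.image x).card = n + 1 := by simp [card_image_of_injective _ hx]
  refine exists_iteratedDeriv_eq_zero_of_strictMono hf
    (univ.image x |>.orderEmbOfFin hcard).strictMono fun i => ?_
  obtain ⟨j, -, hj⟩ := mem_image.mp (orderEmbOfFin_mem _ hcard i)
  rw [← hj, hfx]

theorem exists_eq_iteratedDeriv_div_factorial_mul_prod_sub {m : ℕ} {G : ℝ → ℝ}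
    (hG : ContDiff ℝ m G) {x : Fin m → ℝ} (hx : Function.Injective x) (hGx : ∀ k, G (x k) = 0)
    (t : ℝ) : ∃ ξ, G t = iteratedDeriv m G ξ / m ! * ∏ k, (t - x k) := by
  by_cases ht : t ∈ Set.range x
  · obtain ⟨k, rfl⟩ := ht
    exact ⟨x k, by rw [hGx, prod_eq_zero (mem_univ k) (sub_self _), mul_zero]⟩
  set P : ℝ → ℝ := fun s => ∏ k, (s - x k) with hP_def
  have hP : ContDiff ℝ m P := contDiff_prod fun k _ => contDiff_id.sub contDiff_const
  have hPt : P t ≠ 0 := prod_ne_zero_iff.mpr fun k _ => sub_ne_zero.mpr fun h => ht ⟨k, h.symm⟩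
  set c := G t / P t
  have hG_sub : ContDiff ℝ m fun s => G s - c * P s := hG.sub (contDiff_const.mul hP)
  obtain ⟨ξ, hξ⟩ := exists_iteratedDeriv_eq_zero_of_injective hG_sub
    (Fin.cons_injective_iff.mpr ⟨ht, hx⟩) <| Fin.cases (by simp [c, hPt]) fun k => by
      simp [hGx, hP_def, prod_eq_zero (mem_univ k)]
  rw [iteratedDeriv_fun_sub hG.contDiffAt (contDiff_const.mul hP).contDiffAt,
    iteratedDeriv_const_mul_field, iteratedDeriv_prod_sub, sub_eq_zero] at hξ
  refine ⟨ξ, ?_⟩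
  rw [hξ, mul_div_cancel_right₀ _ (by positivity), div_mul_cancel₀ _ hPt]

theorem mul_prod_sub_nonneg_of_iteratedDeriv_nonneg {m : ℕ} {G : ℝ → ℝ} (hG : ContDiff ℝ m G)
    (hG_nonneg : ∀ t, 0 ≤ iteratedDeriv m G t) {x : Fin m → ℝ} (hx : Function.Injective x)
    (hGx : ∀ k, G (x k) = 0) (t : ℝ) : 0 ≤ G t * ∏ k, (t - x k) := by
  obtain ⟨ξ, hξ⟩ := exists_eq_iteratedDeriv_div_factorial_mul_prod_sub hG hx hGx t
  rw [hξ, mul_assoc, ← sq]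
  have := hG_nonneg ξ
  positivity

theorem eq_zero_of_iteratedDeriv_eq_zero {m : ℕ} {G : ℝ → ℝ} (hG : ContDiff ℝ m G)
    (hG_zero : ∀ t, iteratedDeriv m G t = 0) {x : Fin m → ℝ} (hx : Function.Injective x)
    (hGx : ∀ k, G (x k) = 0) (t : ℝ) : G t = 0 := by
  obtain ⟨ξ, hξ⟩ := exists_eq_iteratedDeriv_div_factorial_mul_prod_sub hG hx hGx t
  rw [hξ, hG_zero, zero_div, zero_mul]

theorem eq_zero_of_forall_mul_sub_nonneg {g : ℝ → ℝ} {a : ℝ} (hg : ContinuousAt g a)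
    (h : ∀ t, 0 ≤ g t * (t - a)) : g a = 0 := by
  refine le_antisymm (le_of_tendsto (hg.continuousWithinAt (s := Set.Iio a)) ?_)
    (ge_of_tendsto (hg.continuousWithinAt (s := Set.Ioi a)) ?_)
  · filter_upwards [self_mem_nhdsWithin] with t (ht : t < a)
    exact nonpos_of_mul_nonneg_left (h t) (sub_neg.mpr ht)
  · filter_upwards [self_mem_nhdsWithin] with t (ht : a < t)
    exact nonneg_of_mul_nonneg_left (h t) (sub_pos.mpr ht)

theorem apply_eq_zero_of_mul_prod_sub_nonneg {m : ℕ} {F : ℝ → ℝ} (hF : Continuous F)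
    {x : Fin m → ℝ} (hx : Function.Injective x) (hFx : ∀ t, 0 ≤ F t * ∏ k, (t - x k))
    (k : Fin m) : F (x k) = 0 := by
  set Q : ℝ → ℝ := fun t => ∏ i ∈ univ.erase k, (t - x i)
  have hQ : Continuous Q := continuous_finsetProd _ fun i _ => continuous_id.sub continuous_const
  have hQk : Q (x k) ≠ 0 :=
    prod_ne_zero_iff.mpr fun i hi => sub_ne_zero.mpr (hx.ne (ne_of_mem_erase hi).symm)
  have hFQ : F (x k) * Q (x k) = 0 :=
    eq_zero_of_forall_mul_sub_nonneg (g := fun t => F t * Q t) (hF.mul hQ).continuousAt fun t => by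
      convert hFx t using 1
      rw [← mul_prod_erase univ (fun i => t - x i) (mem_univ k)]
      ring
  exact (mul_eq_zero.mp hFQ).resolve_right hQk

theorem Continuous.exists_contDiff_iteratedDeriv_eq {f : ℝ → ℝ} (hf : Continuous f) (n : ℕ) :
    ∃ G : ℝ → ℝ, ContDiff ℝ n G ∧ iteratedDeriv n G = f := by
  induction n with
  | zero => exact ⟨f, contDiff_zero.mpr hf, iteratedDeriv_zero⟩
  | succ n ih =>
    obtain ⟨G, hG, hGf⟩ := ih
    have hderiv : ∀ t, HasDerivAt (fun t => ∫ s in (0 : ℝ)..t, G s) (G t) t :=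
      fun t => (hG.continuous.integral_hasStrictDerivAt 0 t).hasDerivAt
    refine ⟨fun t => ∫ s in (0 : ℝ)..t, G s, ?_, ?_⟩
    · rw [Nat.cast_succ, contDiff_succ_iff_deriv, deriv_eq hderiv]
      exact ⟨fun t => (hderiv t).differentiableAt, by simp, hG⟩
    · rw [iteratedDeriv_succ', deriv_eq hderiv, hGf]

theorem Continuous.exists_contDiff_iteratedDeriv_eq_and_eq_zero_at {m : ℕ} {f : ℝ → ℝ}
    (hf : Continuous f) {x : Fin m → ℝ} (hx : Function.Injective x) :
    ∃ F : ℝ → ℝ, ContDiff ℝ m F ∧ iteratedDeriv m F = f ∧ ∀ k, F (x k) = 0 := by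
  obtain ⟨G, hG, hGf⟩ := hf.exists_contDiff_iteratedDeriv_eq m
  set p := Lagrange.interpolate univ x fun k => G (x k)
  have hp : ContDiff ℝ m fun t => p.eval t := by simpa using p.contDiff_aeval (𝕜 := ℝ) m
  have hp_deg : p.degree < m := (Lagrange.degree_interpolate_lt _ hx.injOn).trans_eq (by simp)
  refine ⟨fun t => G t - p.eval t, hG.sub hp, ?_, fun k => ?_⟩
  · funext t
    rw [iteratedDeriv_fun_sub hG.contDiffAt hp.contDiffAt, Polynomial.iteratedDeriv_eval,
      Polynomial.iterate_derivative_eq_zero_of_degree_lt hp_deg, hGf]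
    simp only [Polynomial.eval_zero, sub_zero]
  · show G (x k) - p.eval (x k) = 0
    rw [Lagrange.eval_interpolate_at_node _ hx.injOn (mem_univ k), sub_self]

theorem stmt_8_general (f : ℝ → ℝ) (hf_cont : Continuous f) (hf_nonneg : ∀ t : ℝ, 0 ≤ f t)
    (m : ℕ) (x : Fin m → ℝ) (hx : StrictMono x) :
    ∃! F : ℝ → ℝ, ContDiff ℝ m F ∧ iteratedDeriv m F = f ∧
      ∀ t : ℝ, 0 ≤ F t * ∏ k : Fin m, (t - x k) := by
  obtain ⟨F, hF, hFf, hFx⟩ := hf_cont.exists_contDiff_iteratedDeriv_eq_and_eq_zero_at hx.injective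
  refine ⟨F, ⟨hF, hFf, mul_prod_sub_nonneg_of_iteratedDeriv_nonneg hF (hFf ▸ hf_nonneg)
    hx.injective hFx⟩, ?_⟩
  rintro F' ⟨hF', hF'f, hF'_sign⟩
  have hF'x := apply_eq_zero_of_mul_prod_sub_nonneg hF'.continuous hx.injective hF'_sign
  have hdiff : ∀ t, iteratedDeriv m (fun s => F' s - F s) t = 0 := fun t => by
    rw [iteratedDeriv_fun_sub hF'.contDiffAt hF.contDiffAt, hF'f, hFf, sub_self]
  funext t
  exact sub_eq_zero.mp <| eq_zero_of_iteratedDeriv_eq_zero (hF'.sub hF) hdiff hx.injective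
    (fun k => by rw [hF'x, hFx, sub_self]) t

/-- For a continuous nonnegative `f` and nodes `x 0 < ⋯ < x (m-1)` (`m ≥ 1`),
there is a unique `F ∈ C^m(ℝ)` with `F^(m) = f` whose sign alternates on the
intervals determined by the nodes, i.e. `F t · ∏ k (t - x k) ≥ 0` for all `t`. -/
theorem stmt_8 (f : ℝ → ℝ) (hf_cont : Continuous f) (hf_nonneg : ∀ t : ℝ, 0 ≤ f t)
    (m : ℕ) (hm : 1 ≤ m) (x : Fin m → ℝ) (hx : StrictMono x) :
    ∃! F : ℝ → ℝ, ContDiff ℝ m F ∧ iteratedDeriv m F = f ∧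
      ∀ t : ℝ, 0 ≤ F t * ∏ k : Fin m, (t - x k) :=
  stmt_8_general f hf_cont hf_nonneg m x hx
end

section
/- Let f : ℝ → ℝ be continuous with f(x) ≥ ε > 0 for all x, let m ≥ 1 and x_1 < ... < x_m be reals, let G = I_{x_m}^m f (the m-fold iterated integral of f starting at x_m), let L be the Lagrange interpolation polynomial for G at nodes x_1, ..., x_m, and set F = G - L. Then F(x) > 0 for all x > x_m. -/
/-!
With `m = n + 1` and `P` the Lagrange interpolant of `G`, the function `F = G - P` is `C^(n+1)`
with `F^(n+1) = f > 0` (as `deg P ≤ n`) and vanishes at the `n + 1` nodes. Rolle's theorem gives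
`n` zeros of `F'` interlacing the nodes; by induction on `n`, `F'` is positive to the right of the
last of them, which lies left of the last node, so `F` increases strictly from `F (x last) = 0`.
-/

open Finset

/-- `iterInt a m f` is the `m`-fold iterated integral `I_a^m f`,
where `I_a f (x) = ∫_a^x f(t) dt`. -/
noncomputable def iterInt (a : ℝ) (m : ℕ) (f : ℝ → ℝ) : ℝ → ℝ :=
  (fun g : ℝ → ℝ => fun x => ∫ t in a..x, g t)^[m] f

open Polynomial

lemma iterInt_succ (a : ℝ) (m : ℕ) (f : ℝ → ℝ) :
    iterInt a (m + 1) f = fun x => ∫ t in a..x, iterInt a m f t := by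
  rw [iterInt, Function.iterate_succ_apply']
  rfl

lemma hasDerivAt_iterInt_succ_of_continuous {f : ℝ → ℝ} (a : ℝ) (m : ℕ)
    (hm : Continuous (iterInt a m f)) (x : ℝ) :
    HasDerivAt (iterInt a (m + 1) f) (iterInt a m f x) x := by
  rw [iterInt_succ]
  exact intervalIntegral.integral_hasDerivAt_right (hm.intervalIntegrable a x)
    (hm.stronglyMeasurableAtFilter _ _) hm.continuousAt

section IteratedIntegral

variable {f : ℝ → ℝ} (hf : Continuous f) (a : ℝ)
include hf

lemma continuous_iterInt (m : ℕ) : Continuous (iterInt a m f) := by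
  induction m with
  | zero => exact hf
  | succ m ih =>
    exact continuous_iff_continuousAt.2 fun x =>
      (hasDerivAt_iterInt_succ_of_continuous a m ih x).continuousAt

lemma hasDerivAt_iterInt_succ (m : ℕ) (x : ℝ) :
    HasDerivAt (iterInt a (m + 1) f) (iterInt a m f x) x :=
  hasDerivAt_iterInt_succ_of_continuous a m (continuous_iterInt hf a m) x

lemma deriv_iterInt_succ (m : ℕ) : deriv (iterInt a (m + 1) f) = iterInt a m f :=
  funext fun x => (hasDerivAt_iterInt_succ hf a m x).deriv

lemma contDiff_iterInt (m : ℕ) : ContDiff ℝ m (iterInt a m f) := by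
  induction m with
  | zero => exact contDiff_zero.2 hf
  | succ m ih =>
    rw [Nat.cast_succ]
    refine contDiff_succ_iff_deriv.2 ⟨fun x => (hasDerivAt_iterInt_succ hf a m x).differentiableAt,
      by simp, ?_⟩
    rwa [deriv_iterInt_succ hf a m]

lemma iteratedDeriv_iterInt (m : ℕ) : iteratedDeriv m (iterInt a m f) = f := by
  induction m with
  | zero => rfl
  | succ m ih => rw [iteratedDeriv_succ', deriv_iterInt_succ hf a m, ih]

end IteratedIntegral

lemma iteratedDeriv_polynomial_eval {𝕜 : Type*} [NontriviallyNormedField 𝕜] (p : 𝕜[X]) (k : ℕ) :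
    iteratedDeriv k (fun t => p.eval t) = fun t => (derivative^[k] p).eval t := by
  induction k with
  | zero => rfl
  | succ k ih =>
    rw [iteratedDeriv_succ, ih, Function.iterate_succ_apply']
    exact funext fun t => Polynomial.deriv _

lemma Lagrange.eval_interpolate_univ {K ι : Type*} [Field K] [Fintype ι] [DecidableEq ι]
    (v r : ι → K) (t : K) :
    (Lagrange.interpolate univ v r).eval t =
      ∑ k, r k * ∏ j ∈ univ.erase k, (t - v j) / (v k - v j) := by
  simp only [Lagrange.interpolate_apply, eval_finsetSum, eval_mul, eval_C, Lagrange.basis,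
    eval_prod, Lagrange.basisDivisor, eval_sub, eval_X, div_eq_inv_mul]

lemma exists_strictMono_deriv_eq_zero {n : ℕ} {F : ℝ → ℝ} (hF : Differentiable ℝ F)
    {s : Fin (n + 2) → ℝ} (hs : StrictMono s) (hz : ∀ i, F (s i) = 0) :
    ∃ c : Fin (n + 1) → ℝ, StrictMono c ∧ (∀ i, deriv F (c i) = 0) ∧
      c (Fin.last n) < s (Fin.last (n + 1)) := by
  have hrolle (i : Fin (n + 1)) : ∃ c ∈ Set.Ioo (s i.castSucc) (s i.succ), deriv F c = 0 :=
    exists_deriv_eq_zero (hs i.castSucc_lt_succ) hF.continuous.continuousOn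
      ((hz _).trans (hz _).symm)
  choose c hc hcz using hrolle
  refine ⟨c, Fin.strictMono_iff_lt_succ.2 fun i => ?_, hcz, ?_⟩
  · calc c i.castSucc < s i.castSucc.succ := (hc i.castSucc).2
      _ = s i.succ.castSucc := by rw [Fin.succ_castSucc]
      _ < c i.succ := (hc i.succ).1
  · simpa only [Fin.succ_last] using (hc (Fin.last n)).2

lemma pos_of_iteratedDeriv_pos_of_zeros {n : ℕ} {F : ℝ → ℝ} (hF : ContDiff ℝ n F)
    (hpos : ∀ t, 0 < iteratedDeriv (n + 1) F t) {s : Fin (n + 1) → ℝ} (hs : StrictMono s)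
    (hz : ∀ i, F (s i) = 0) {t : ℝ} (ht : s (Fin.last n) < t) : 0 < F t := by
  induction n generalizing F t with
  | zero =>
    have hmono : StrictMono F := strictMono_of_deriv_pos fun u => by
      simpa only [zero_add, iteratedDeriv_one] using hpos u
    exact (hz _).symm.trans_lt (hmono ht)
  | succ n ih =>
    rw [Nat.cast_succ] at hF
    obtain ⟨hdiff, -, hF'⟩ := contDiff_succ_iff_deriv.1 hF
    obtain ⟨c, hc, hcz, hcs⟩ := exists_strictMono_deriv_eq_zero hdiff hs hz
    have hderiv_pos (u : ℝ) (hu : c (Fin.last n) < u) : 0 < deriv F u :=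
      ih hF' (fun u => iteratedDeriv_succ' (f := F) ▸ hpos u) hc hcz hu
    have hmono : StrictMonoOn F (Set.Ici (c (Fin.last n))) :=
      strictMonoOn_of_deriv_pos (convex_Ici _) hdiff.continuous.continuousOn
        fun u hu => hderiv_pos u (by rwa [interior_Ici] at hu)
    exact (hz _).symm.trans_lt (hmono hcs.le (hcs.trans ht).le ht)

/-- If `f` is continuous with `f ≥ ε > 0`, `G = I_{x_m}^m f`, and `L` is the
Lagrange interpolation polynomial of `G` at the nodes `x 0 < ⋯ < x (m-1)`, then
`F = G - L` is strictly positive to the right of the largest node. -/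
theorem stmt_9 (f : ℝ → ℝ) (hf_cont : Continuous f) (ε : ℝ) (hε : 0 < ε)
    (hf : ∀ t : ℝ, ε ≤ f t) (m : ℕ) (hm : 1 ≤ m) (x : Fin m → ℝ) (hx : StrictMono x) :
    have last : Fin m := ⟨m - 1, by omega⟩
    have G : ℝ → ℝ := iterInt (x last) m f
    have L : ℝ → ℝ := fun t => ∑ k : Fin m, G (x k) * ∏ j ∈ Finset.univ.erase k,
      (t - x j) / (x k - x j)
    ∀ t : ℝ, x last < t → 0 < G t - L t := by
  obtain ⟨n, rfl⟩ : ∃ n, m = n + 1 := ⟨m - 1, by omega⟩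
  intro last G L t ht
  set P := Lagrange.interpolate univ x fun k => G (x k)
  set F : ℝ → ℝ := fun v => G v - P.eval v
  have hG : ContDiff ℝ (n + 1) G := contDiff_iterInt hf_cont _ _
  have hP : ContDiff ℝ (n + 1) fun t => P.eval t := P.contDiff_aeval _
  have hinj : Set.InjOn x (univ : Finset (Fin (n + 1))) := hx.injective.injOn
  have hLP (u : ℝ) : L u = P.eval u := (Lagrange.eval_interpolate_univ _ _ u).symm
  have hdegP : P.degree < ↑(n + 1) := by
    simpa only [card_univ, Fintype.card_fin] using Lagrange.degree_interpolate_lt _ hinj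
  have hpos (u : ℝ) : 0 < iteratedDeriv (n + 1) F u := by
    rw [iteratedDeriv_fun_sub hG.contDiffAt hP.contDiffAt, iteratedDeriv_iterInt hf_cont,
      iteratedDeriv_polynomial_eval, iterate_derivative_eq_zero_of_degree_lt hdegP]
    simpa only [eval_zero, sub_zero] using hε.trans_le (hf u)
  have hz (i : Fin (n + 1)) : F (x i) = 0 := by
    show G (x i) - P.eval (x i) = 0
    rw [Lagrange.eval_interpolate_at_node _ hinj (mem_univ i), sub_self]
  rw [hLP]
  exact pos_of_iteratedDeriv_pos_of_zeros ((hG.sub hP).of_le le_self_add) hpos hx hz ht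
end

section
/- Let X be a real-valued random variable, a ∈ ℝ, B(x) := sign(x - a), and suppose E|X| < ∞ and α := E[|X - a|] > 0. Define p(t) := (1/α) E[ B(X) (1_{a ≤ t ≤ X} - 1_{X < t < a}) ]. Then p is a probability density function on ℝ, i.e. p ≥ 0 and ∫_ℝ p(t) dt = 1. -/
/-!
For fixed `x`, the integrand `sign (x - a) * (1_{a ≤ t ≤ x} - 1_{x < t < a})` is the indicator
of the interval between `a` and `x` (`[a, x]` if `a < x`, `(x, a)` otherwise), so it is
nonnegative and its integral in `t` is `|x - a|`. By Fubini–Tonelli,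
`∫ p = α⁻¹ E[∫ … dt] = α⁻¹ E|X - a| = 1`.
-/

open MeasureTheory Set

theorem integral_integral_swap_of_nonneg {α β : Type*} [MeasurableSpace α] [MeasurableSpace β]
    {μ : Measure α} {ν : Measure β} [SFinite μ] [SFinite ν] {f : α → β → ℝ}
    (hf : AEStronglyMeasurable (Function.uncurry f) (μ.prod ν)) (hf_nonneg : ∀ x y, 0 ≤ f x y)
    (hf_sec : ∀ᵐ x ∂μ, Integrable (f x) ν) (hf_int : Integrable (fun x => ∫ y, f x y ∂ν) μ) :
    ∫ y, ∫ x, f x y ∂μ ∂ν = ∫ x, ∫ y, f x y ∂ν ∂μ := by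
  refine (integral_integral_swap ((integrable_prod_iff hf).2 ⟨hf_sec, ?_⟩)).symm
  simpa only [Function.uncurry_apply_pair, Real.norm_of_nonneg (hf_nonneg _ _)] using hf_int

theorem Real.measurable_sign : Measurable Real.sign :=
  Measurable.ite (measurableSet_lt measurable_id measurable_const) measurable_const <|
    Measurable.ite (measurableSet_lt measurable_const measurable_id) measurable_const
      measurable_const

noncomputable def signKernel (a x t : ℝ) : ℝ :=
  Real.sign (x - a) *
    ((if a ≤ t ∧ t ≤ x then (1 : ℝ) else 0) - (if x < t ∧ t < a then (1 : ℝ) else 0))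

theorem measurable_signKernel (a : ℝ) : Measurable fun q : ℝ × ℝ => signKernel a q.1 q.2 := by
  have h₁ : MeasurableSet {q : ℝ × ℝ | a ≤ q.2 ∧ q.2 ≤ q.1} := by measurability
  have h₂ : MeasurableSet {q : ℝ × ℝ | q.1 < q.2 ∧ q.2 < a} := by measurability
  exact (Real.measurable_sign.comp (measurable_fst.sub_const a)).mul <|
    (Measurable.ite h₁ measurable_const measurable_const).sub
      (Measurable.ite h₂ measurable_const measurable_const)

theorem signKernel_eq_indicator (a x : ℝ) :
    signKernel a x = (if a < x then Icc a x else Ioo x a).indicator 1 := by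
  ext t
  rcases lt_trichotomy x a with h | rfl | h
  · have : ¬ (a ≤ t ∧ t ≤ x) := fun h' => (h'.1.trans h'.2).not_gt h
    simp [signKernel, indicator, Real.sign_of_neg (sub_neg.2 h), h.not_gt, this, apply_ite]
  · simp [signKernel]
  · have : ¬ (x < t ∧ t < a) := fun h' => (h'.1.trans h'.2).not_gt h
    simp [signKernel, indicator, Real.sign_of_pos (sub_pos.2 h), h, this]

theorem signKernel_nonneg (a x t : ℝ) : 0 ≤ signKernel a x t := by
  rw [signKernel_eq_indicator]
  exact indicator_nonneg (fun _ _ => zero_le_one) t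

theorem integrable_signKernel (a x : ℝ) : Integrable (signKernel a x) := by
  rw [signKernel_eq_indicator]
  split_ifs
  · exact (integrable_indicator_iff measurableSet_Icc).2 (integrableOn_const (by simp))
  · exact (integrable_indicator_iff measurableSet_Ioo).2 (integrableOn_const (by simp))

theorem integral_signKernel (a x : ℝ) : ∫ t, signKernel a x t = |x - a| := by
  rw [signKernel_eq_indicator]
  split_ifs with h
  · rw [integral_indicator_one measurableSet_Icc, Real.volume_real_Icc_of_le h.le,
      abs_of_pos (sub_pos.2 h)]
  · rw [integral_indicator_one measurableSet_Ioo, Real.volume_real_Ioo_of_le (not_lt.1 h),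
      abs_of_nonpos (sub_nonpos.2 (not_lt.1 h)), neg_sub]

/-- If `X` is an integrable real random variable with `α := E|X - a| > 0` and
`B(x) = sign(x - a)`, then `p(t) = α⁻¹ E[B(X)(1_{a ≤ t ≤ X} - 1_{X < t < a})]`
is a probability density on `ℝ`. -/
theorem stmt_12 {Ω : Type*} [MeasurableSpace Ω] (P : Measure Ω) [IsProbabilityMeasure P]
    (X : Ω → ℝ) (hX_meas : Measurable X) (hX_int : Integrable X P) (a : ℝ)
    (hα : 0 < ∫ ω, |X ω - a| ∂P) :
    have α : ℝ := ∫ ω, |X ω - a| ∂P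
    have p : ℝ → ℝ := fun t => (1 / α) *
      ∫ ω, Real.sign (X ω - a) *
        ((if a ≤ t ∧ t ≤ X ω then (1 : ℝ) else 0) -
          (if X ω < t ∧ t < a then (1 : ℝ) else 0)) ∂P
    (∀ t : ℝ, 0 ≤ p t) ∧ ∫ t : ℝ, p t = 1 := by
  intro α p
  change (∀ t, 0 ≤ (1 / α) * ∫ ω, signKernel a (X ω) t ∂P) ∧
    ∫ t, (1 / α) * ∫ ω, signKernel a (X ω) t ∂P = 1
  refine ⟨fun t => mul_nonneg (one_div_nonneg.2 hα.le)
    (integral_nonneg fun ω => signKernel_nonneg ..), ?_⟩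
  have hswap : ∫ t, ∫ ω, signKernel a (X ω) t ∂P = ∫ ω, (∫ t, signKernel a (X ω) t) ∂P :=
    integral_integral_swap_of_nonneg (f := fun ω t => signKernel a (X ω) t)
      ((measurable_signKernel a).comp (hX_meas.prodMap measurable_id)).aestronglyMeasurable
      (fun _ _ => signKernel_nonneg ..) (.of_forall fun ω => integrable_signKernel a (X ω))
      (by simpa only [integral_signKernel, Pi.sub_apply] using
        (hX_int.sub (integrable_const a)).abs)
  rw [integral_const_mul, hswap]
  simp only [integral_signKernel]
  exact one_div_mul_cancel hα.ne'
end

section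
/- Let (S, 𝒮, γ) be a probability space, let (α_s)_{s∈S} be nonnegative measurable with α := ∫_S α_s dγ(s) ∈ (0, ∞), and let (μ_s)_{s∈S} be a Markov kernel of probability measures on ℝ. If for each s, E[B(X_s)(F(X_s) - L_F(X_s))] = α_s E[F^(m)(X_s^{(B)})] for all F in a test class, and if X = X_I with I ∼ γ independent of (X_s), and J is independent of (X_s^{(B)}) with P(J ∈ ds) = (α_s/α) dγ(s), then E[B(X)(F(X) - L_F(X))] = α E[F^(m)(X_J^{(B)})] for all F in the test class. -/
open MeasureTheory Finset

/-- Mixtures: if for each `s` the variable `XB s` has the generalized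
`X s - B` biased distribution with constant `αs s`, i.e.
`E[B(X s)(F(X s) - L_F(X s))] = αs s · E[F^(m)(XB s)]` for every test function
`F` (in `C^{m-1}` with Lipschitz `(m-1)`-st derivative), with
`α := ∫ αs dγ ∈ (0, ∞)`, then for the mixture `X = X_I`, `I ∼ γ`, and the
index `J` with `P(J ∈ ds) = (αs s / α) dγ(s)` one has
`E[B(X)(F(X) - L_F(X))] = α · E[F^(m)(X_J^{(B)})]`. -/
theorem stmt_17 {S Ω : Type*} [MeasurableSpace S] [MeasurableSpace Ω]
    (γ : Measure S) [IsProbabilityMeasure γ] (P : Measure Ω) [IsProbabilityMeasure P]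
    (m : ℕ) (hm : 1 ≤ m) (x : Fin m → ℝ) (hx : StrictMono x)
    (B : ℝ → ℝ) (hB_meas : Measurable B)
    (X : S → Ω → ℝ) (XB : S → Ω → ℝ)
    (αs : S → ℝ) (hαs_meas : Measurable αs) (hαs_nonneg : ∀ s, 0 ≤ αs s)
    (hαs_int : Integrable αs γ)
    (hα_pos : 0 < ∫ s, αs s ∂γ)
    -- `L_F` is the Lagrange interpolation polynomial of `F` at the nodes `x`
    (LF : (ℝ → ℝ) → ℝ → ℝ)
    (hLF : ∀ F : ℝ → ℝ, ∀ t : ℝ, LF F t =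
      ∑ k : Fin m, F (x k) * ∏ j ∈ univ.erase k, (t - x j) / (x k - x j))
    -- each `XB s` has the generalized `X s - B` biased distribution
    (hbias : ∀ s : S, ∀ F : ℝ → ℝ, ContDiff ℝ (m - 1 : ℕ) F →
      (∃ K : NNReal, LipschitzWith K (iteratedDeriv (m - 1) F)) →
      ∫ ω, B (X s ω) * (F (X s ω) - LF F (X s ω)) ∂P
        = αs s * ∫ ω, iteratedDeriv m F (XB s ω) ∂P)
    -- joint integrability, allowing Fubini
    (hint : ∀ F : ℝ → ℝ, ContDiff ℝ (m - 1 : ℕ) F →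
      (∃ K : NNReal, LipschitzWith K (iteratedDeriv (m - 1) F)) →
      Integrable (fun s => ∫ ω, B (X s ω) * (F (X s ω) - LF F (X s ω)) ∂P) γ ∧
      Integrable (fun s => αs s * ∫ ω, iteratedDeriv m F (XB s ω) ∂P) γ) :
    ∀ F : ℝ → ℝ, ContDiff ℝ (m - 1 : ℕ) F →
      (∃ K : NNReal, LipschitzWith K (iteratedDeriv (m - 1) F)) →
      -- `E[B(X)(F(X) - L_F(X))]` for the mixture `X = X_I`
      ∫ s, (∫ ω, B (X s ω) * (F (X s ω) - LF F (X s ω)) ∂P) ∂γ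
        -- `α · E[F^(m)(X_J^{(B)})]` where `J` has density `αs/α` w.r.t. `γ`
        = (∫ s, αs s ∂γ) *
            ∫ s, (αs s / ∫ s', αs s' ∂γ) * (∫ ω, iteratedDeriv m F (XB s ω) ∂P) ∂γ := by
  intro F hF hLip
  set α := ∫ s, αs s ∂γ with hα
  have hα0 : α ≠ 0 := ne_of_gt hα_pos
  have h1 : ∫ s, (∫ ω, B (X s ω) * (F (X s ω) - LF F (X s ω)) ∂P) ∂γ
      = ∫ s, αs s * ∫ ω, iteratedDeriv m F (XB s ω) ∂P ∂γ := by
    refine integral_congr_ae (Filter.Eventually.of_forall fun s => ?_)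
    exact hbias s F hF hLip
  have h2 : ∀ s, (αs s / α) * (∫ ω, iteratedDeriv m F (XB s ω) ∂P)
      = α⁻¹ * (αs s * ∫ ω, iteratedDeriv m F (XB s ω) ∂P) := by
    intro s; field_simp
  rw [h1]
  simp_rw [h2]
  rw [integral_const_mul, ← mul_assoc, mul_inv_cancel₀ hα0, one_mul]
end

section
/- Let X be a nonnegative real random variable with 0 < E[X^2] < ∞ whose distribution has a Lebesgue density p satisfying p(t) = (1/E[X^2]) ∫_t^∞ s p(s) ds for all t > 0 (i.e. the law of X is a fixed point of the generalized zero bias transformation restricted to [0,∞)). Then there exists c ≥ 0 such that p(t) = c exp(-t^2 / (2 E[X^2])) for a.e. t > 0; in particular X has the half-normal distribution with parameter σ² = E[X²]. -/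
/-!
Differentiating the fixed-point equation gives `p' = -(t / σ²) p` on `(0, ∞)`, so
`p t * exp (t² / (2σ²))` is constant there and `p` is a multiple of the Gaussian; the constant is
then fixed by the total mass `1`. The equation only carries information once `s ↦ s p s` is
integrable on every `(t, ∞)`: where it is not, the Bochner integral is `0` and so is `p`. Hence
the set of bad `t` is an interval `(0, a)` on which `p = 0` (bounded, as `p` has mass `1`),
while on `(a, ∞)` the ODE argument makes `p` Gaussian; so `s p s` is integrable on `(a / 2, ∞)`
after all, forcing `a = 0`.
-/

open MeasureTheory Real Set Filter Topology

section
variable {f : ℝ → ℝ} {a t : ℝ}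

theorem continuousAt_integral_Ioi (hf : IntegrableOn f (Ioi a)) (ht : a < t) :
    ContinuousAt (fun u => ∫ x in Ioi u, f x) t := by
  have hprim : ContinuousAt (fun u => ∫ x in a..u, f x) t := by
    have hint : IntervalIntegrable f volume a (t + 1) :=
      (intervalIntegrable_iff_integrableOn_Ioc_of_le (by linarith)).2
        (hf.mono_set Ioc_subset_Ioi_self)
    refine (intervalIntegral.continuousOn_primitive_interval' hint left_mem_uIcc).continuousAt ?_
    rw [uIcc_of_le (by linarith)]
    exact Icc_mem_nhds ht (by linarith)
  refine ((continuousAt_const (y := ∫ x in Ioi a, f x)).sub hprim).congr ?_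
  filter_upwards [Ioi_mem_nhds ht] with u hu
  rw [Pi.sub_apply, ← intervalIntegral.integral_Ioi_sub_Ioi hf hu.le, sub_sub_cancel]

theorem hasDerivAt_integral_Ioi (hf : IntegrableOn f (Ioi a)) (ht : a < t)
    (hcont : ContinuousAt f t) : HasDerivAt (fun u => ∫ x in Ioi u, f x) (-f t) t := by
  have hderiv := intervalIntegral.integral_hasDerivAt_left IntervalIntegrable.refl
    ⟨Ioi a, Ioi_mem_nhds ht, hf.aestronglyMeasurable⟩ hcont
  refine (hderiv.add_const (∫ x in Ioi t, f x)).congr_of_eventuallyEq ?_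
  filter_upwards [Ioi_mem_nhds ht] with u hu
  exact (intervalIntegral.integral_interval_add_Ioi (hf.mono_set (Ioi_subset_Ioi hu.le))
    (hf.mono_set (Ioi_subset_Ioi ht.le))).symm
end

theorem exists_eq_mul_exp_of_eq_integral_Ioi {σ2 a : ℝ} {p : ℝ → ℝ}
    (hfix : ∀ t, a < t → p t = (1 / σ2) * ∫ s in Ioi t, s * p s)
    (hint : ∀ t, a < t → IntegrableOn (fun s => s * p s) (Ioi t)) :
    ∃ c, ∀ t, a < t → p t = c * exp (-t ^ 2 / (2 * σ2)) := by
  have hp_eq : ∀ t, a < t → p =ᶠ[𝓝 t] fun u => (1 / σ2) * ∫ s in Ioi u, s * p s :=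
    fun t ht => eventually_of_mem (Ioi_mem_nhds ht) hfix
  have hderiv : ∀ t, a < t → HasDerivAt p ((1 / σ2) * -(t * p t)) t := by
    intro t ht
    obtain ⟨a', ha', ha't⟩ := exists_between ht
    have hcont : ContinuousAt p t :=
      ((continuousAt_integral_Ioi (hint a' ha') ha't).const_mul _).congr (hp_eq t ht).symm
    exact ((hasDerivAt_integral_Ioi (hint a' ha') ha't (continuousAt_id.mul hcont)).const_mul
      _).congr_of_eventuallyEq (hp_eq t ht)
  set g : ℝ → ℝ := fun t => p t * exp (t ^ 2 / (2 * σ2))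
  have hg : ∀ t, a < t → HasDerivAt g 0 t := by
    intro t ht
    have hexp : HasDerivAt (fun t => exp (t ^ 2 / (2 * σ2)))
        (exp (t ^ 2 / (2 * σ2)) * (2 * t / (2 * σ2))) t := by
      simpa using ((hasDerivAt_pow 2 t).div_const (2 * σ2)).exp
    refine ((hderiv t ht).mul hexp).congr_deriv ?_
    rw [mul_div_mul_left _ _ (two_ne_zero (α := ℝ))]
    ring
  obtain ⟨c, hc⟩ := isOpen_Ioi.exists_is_const_of_deriv_eq_zero isPreconnected_Ioi
    (fun t ht => (hg t ht).differentiableAt.differentiableWithinAt) (fun t ht => (hg t ht).deriv)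
  refine ⟨c, fun t ht => ?_⟩
  rw [← hc t ht, mul_assoc, ← exp_add, neg_div, add_neg_cancel, exp_zero, mul_one]

section
variable {σ2 : ℝ}

theorem neg_sq_div_two_mul (t : ℝ) : -t ^ 2 / (2 * σ2) = -(1 / (2 * σ2)) * t ^ 2 := by
  ring

theorem integrable_mul_exp_neg_sq_div (hσ2 : 0 < σ2) :
    Integrable fun t => t * exp (-t ^ 2 / (2 * σ2)) := by
  simpa only [neg_sq_div_two_mul] using
    integrable_mul_exp_neg_mul_sq (by positivity : 0 < 1 / (2 * σ2))

theorem integral_Ioi_exp_neg_sq_div (hσ2 : 0 < σ2) :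
    ∫ t in Ioi 0, exp (-t ^ 2 / (2 * σ2)) = √(π * σ2 / 2) := by
  simp only [neg_sq_div_two_mul, integral_gaussian_Ioi]
  rw [show π / (1 / (2 * σ2)) = 2 ^ 2 * (π * σ2 / 2) by field_simp, sqrt_mul (by positivity),
    sqrt_sq zero_le_two]
  ring

theorem lintegral_Ioi_ofReal_mul_exp_neg_sq_div (hσ2 : 0 < σ2) (c : ℝ) :
    ∫⁻ t in Ioi 0, ENNReal.ofReal (c * exp (-t ^ 2 / (2 * σ2))) =
      ENNReal.ofReal (c * √(π * σ2 / 2)) := by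
  have hint : IntegrableOn (fun t => exp (-t ^ 2 / (2 * σ2))) (Ioi 0) := by
    simpa only [neg_sq_div_two_mul] using
      (integrable_exp_neg_mul_sq (by positivity : 0 < 1 / (2 * σ2))).integrableOn
  simp_rw [ENNReal.ofReal_mul' (exp_nonneg _)]
  rw [lintegral_const_mul' _ _ ENNReal.ofReal_ne_top,
    ← ofReal_integral_eq_lintegral_ofReal hint (ae_of_all _ fun _ => exp_nonneg _),
    integral_Ioi_exp_neg_sq_div hσ2, ENNReal.ofReal_mul' (sqrt_nonneg _)]
end

theorem integrableOn_Ioi_of_eq_integral_Ioi {σ2 : ℝ} {p : ℝ → ℝ} (hσ2 : 0 < σ2)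
    (hfix : ∀ t, 0 < t → p t = (1 / σ2) * ∫ s in Ioi t, s * p s)
    (hp : ∃ t, 0 < t ∧ p t ≠ 0) :
    ∀ t, 0 < t → IntegrableOn (fun s => s * p s) (Ioi t) := by
  set S := {t | 0 < t ∧ IntegrableOn (fun s => s * p s) (Ioi t)}
  have hzero : ∀ t, 0 < t → t ∉ S → p t = 0 := fun t ht hS => by
    rw [hfix t ht, integral_undef fun h => hS ⟨ht, h⟩, mul_zero]
  have hS : S.Nonempty := by
    obtain ⟨t, ht, hpt⟩ := hp
    exact ⟨t, by_contra fun hS => hpt (hzero t ht hS)⟩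
  have hbdd : BddBelow S := ⟨0, fun t ht => ht.1.le⟩
  have hint : ∀ t, sInf S < t → IntegrableOn (fun s => s * p s) (Ioi t) := fun t ht => by
    obtain ⟨s, hs, hst⟩ := exists_lt_of_csInf_lt hS ht
    exact hs.2.mono_set (Ioi_subset_Ioi hst.le)
  suffices hinf : sInf S = 0 from fun t ht => hint t (hinf ▸ ht)
  by_contra hne
  have hpos : 0 < sInf S := (le_csInf hS fun t ht => ht.1.le).lt_of_ne' hne
  obtain ⟨c, hc⟩ :=
    exists_eq_mul_exp_of_eq_integral_Ioi (fun t ht => hfix t (hpos.trans ht)) hint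
  have hint_below : IntegrableOn (fun s => s * p s) (Ioc (sInf S / 2) (sInf S)) := by
    rw [integrableOn_Ioc_iff_integrableOn_Ioo]
    refine integrableOn_zero.congr_fun (fun s hs => ?_) measurableSet_Ioo
    rw [hzero s (by linarith [hs.1]) (notMem_of_lt_csInf hs.2 hbdd), mul_zero]
  have hint_above : IntegrableOn (fun s => s * p s) (Ioi (sInf S)) := by
    refine ((integrable_mul_exp_neg_sq_div hσ2).const_mul c).integrableOn.congr_fun
      (fun s hs => ?_) measurableSet_Ioi
    rw [hc s hs]; ring
  have hhalf : sInf S / 2 ∈ S := ⟨by positivity, by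
    simpa [Ioc_union_Ioi_eq_Ioi (half_le_self hpos.le)] using hint_below.union hint_above⟩
  linarith [csInf_le hbdd hhalf]

theorem stmt_18_general {Ω : Type*} [MeasurableSpace Ω] (P : Measure Ω) [IsProbabilityMeasure P]
    (X : Ω → ℝ) (hX_meas : Measurable X) (hX_nonneg : ∀ ω, 0 ≤ X ω)
    (hX_sq_pos : 0 < ∫ ω, (X ω) ^ 2 ∂P)
    (p : ℝ → ℝ) (hp_meas : Measurable p)
    (hp_law : Measure.map X P = volume.withDensity (fun t => ENNReal.ofReal (p t)))
    (hfix : ∀ t : ℝ, 0 < t →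
      p t = (1 / ∫ ω, (X ω) ^ 2 ∂P) * ∫ s in Set.Ioi t, s * p s) :
    have σ2 : ℝ := ∫ ω, (X ω) ^ 2 ∂P
    (∃ c : ℝ, 0 ≤ c ∧ ∀ᵐ t : ℝ, 0 < t → p t = c * Real.exp (-t ^ 2 / (2 * σ2))) ∧
      Measure.map X P = volume.withDensity (fun t => ENNReal.ofReal
        (Set.indicator (Set.Ici (0 : ℝ))
          (fun t => Real.sqrt (2 / (π * σ2)) * Real.exp (-t ^ 2 / (2 * σ2))) t)) := by
  intro σ2
  have hσ2 : 0 < σ2 := hX_sq_pos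
  have hmass : ∫⁻ t in Ioi 0, ENNReal.ofReal (p t) = 1 := by
    rw [setLIntegral_congr Ioi_ae_eq_Ici, ← withDensity_apply _ measurableSet_Ici, ← hp_law,
      Measure.map_apply hX_meas measurableSet_Ici,
      eq_univ_of_forall (s := X ⁻¹' Ici 0) hX_nonneg, measure_univ]
  have hneg : ∀ᵐ t, t < 0 → ENNReal.ofReal (p t) = 0 := by
    have hIio : volume.withDensity (fun t => ENNReal.ofReal (p t)) (Iio 0) = 0 := by
      rw [← hp_law, Measure.map_apply hX_meas measurableSet_Iio,
        eq_empty_of_forall_notMem (s := X ⁻¹' Iio 0) fun ω hω => (hX_nonneg ω).not_gt hω,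
        measure_empty]
    rw [withDensity_apply _ measurableSet_Iio,
      lintegral_eq_zero_iff hp_meas.ennreal_ofReal] at hIio
    exact (ae_restrict_iff' measurableSet_Iio).1 hIio
  have hp_ne : ∃ t, 0 < t ∧ p t ≠ 0 := by
    by_contra! h
    rw [setLIntegral_congr_fun measurableSet_Ioi fun t ht => by rw [h t ht, ENNReal.ofReal_zero],
      lintegral_zero] at hmass
    exact zero_ne_one hmass
  obtain ⟨c, hc⟩ := exists_eq_mul_exp_of_eq_integral_Ioi hfix
    (integrableOn_Ioi_of_eq_integral_Ioi hσ2 hfix hp_ne)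
  have hc_eq : c = √(2 / (π * σ2)) := by
    rw [setLIntegral_congr_fun measurableSet_Ioi fun t ht => congrArg ENNReal.ofReal (hc t ht),
      lintegral_Ioi_ofReal_mul_exp_neg_sq_div hσ2, ENNReal.ofReal_eq_one] at hmass
    rw [eq_inv_of_mul_eq_one_left hmass, ← sqrt_inv, inv_div]
  subst hc_eq
  refine ⟨⟨_, sqrt_nonneg _, ae_of_all _ hc⟩, hp_law.trans (withDensity_congr_ae ?_)⟩
  filter_upwards [hneg, Measure.ae_ne volume 0] with t htneg ht0
  rcases ht0.lt_or_gt with ht | ht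
  · simp [htneg ht, indicator_of_notMem (notMem_Ici.2 ht)]
  · rw [indicator_of_mem (mem_Ici.2 ht.le), hc t ht]

/-- If a nonnegative random variable `X` with `0 < E[X²] < ∞` has a Lebesgue
density `p` satisfying the fixed-point equation
`p(t) = (1/E[X²]) ∫_t^∞ s p(s) ds` for all `t > 0`, then there is `c ≥ 0` with
`p(t) = c exp(-t²/(2E[X²]))` for a.e. `t > 0`; in particular `X` is
half-normal with parameter `σ² = E[X²]`. -/
theorem stmt_18 {Ω : Type*} [MeasurableSpace Ω] (P : Measure Ω) [IsProbabilityMeasure P]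
    (X : Ω → ℝ) (hX_meas : Measurable X) (hX_nonneg : ∀ ω, 0 ≤ X ω)
    (hX_sq_int : Integrable (fun ω => (X ω) ^ 2) P)
    (hX_sq_pos : 0 < ∫ ω, (X ω) ^ 2 ∂P)
    (p : ℝ → ℝ) (hp_meas : Measurable p)
    (hp_law : Measure.map X P = volume.withDensity (fun t => ENNReal.ofReal (p t)))
    (hfix : ∀ t : ℝ, 0 < t →
      p t = (1 / ∫ ω, (X ω) ^ 2 ∂P) * ∫ s in Set.Ioi t, s * p s) :
    have σ2 : ℝ := ∫ ω, (X ω) ^ 2 ∂P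
    (∃ c : ℝ, 0 ≤ c ∧ ∀ᵐ t : ℝ, 0 < t → p t = c * Real.exp (-t ^ 2 / (2 * σ2))) ∧
      Measure.map X P = volume.withDensity (fun t => ENNReal.ofReal
        (Set.indicator (Set.Ici (0 : ℝ))
          (fun t => Real.sqrt (2 / (π * σ2)) * Real.exp (-t ^ 2 / (2 * σ2))) t)) :=
  stmt_18_general P X hX_meas hX_nonneg hX_sq_pos p hp_meas hp_law hfix
end

section
/- Let X have the half-normal distribution with parameter σ² > 0 (i.e. X = |Z|, Z ∼ N(0, σ²)). Then for every Lipschitz function f : [0,∞) → ℝ, E[X²] E[f'(X)] = E[X (f(X) - f(0))], where E[X²] = σ². -/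
open MeasureTheory Real

/-!
The half-normal density `p` satisfies `∫ₛ^∞ t p(t) dt = σ² p(s)`. Writing
`f(t) - f(0) = ∫₀ᵗ f'` (a Lipschitz function is absolutely continuous) and exchanging
the order of integration turns `E[X (f(X) - f(0))]` into `∫₀^∞ f'(s) σ² p(s) ds = σ² E[f'(X)]`;
the choice `f = id` gives `E[X²] = σ²`.
-/

open Set Filter

theorem integral_comp_eq_integral_mul_of_map_eq_withDensity {Ω : Type*} [MeasurableSpace Ω]
    {P : Measure Ω} {X : Ω → ℝ} (hX : Measurable X) {d : ℝ → ℝ} (hd : Measurable d)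
    (hd_nonneg : 0 ≤ d) (hX_law : P.map X = volume.withDensity fun t => ENNReal.ofReal (d t))
    {g : ℝ → ℝ} (hg : Measurable g) :
    ∫ ω, g (X ω) ∂P = ∫ t, d t * g t := by
  rw [← integral_map hX.aemeasurable hg.aestronglyMeasurable, hX_law,
    integral_withDensity_eq_integral_toReal_smul hd.ennreal_ofReal
      (ae_of_all _ fun _ => ENNReal.ofReal_lt_top)]
  simp_rw [ENNReal.toReal_ofReal (hd_nonneg _), smul_eq_mul]

theorem integral_comp_eq_integral_Ioi_mul_of_map_eq_withDensity_indicator {Ω : Type*}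
    [MeasurableSpace Ω] {P : Measure Ω} {X : Ω → ℝ} (hX : Measurable X) {p : ℝ → ℝ}
    (hp : Measurable p) (hp_nonneg : ∀ t ∈ Ici 0, 0 ≤ p t)
    (hX_law : P.map X = volume.withDensity fun t => ENNReal.ofReal ((Ici 0).indicator p t))
    {g : ℝ → ℝ} (hg : Measurable g) :
    ∫ ω, g (X ω) ∂P = ∫ t in Ioi 0, p t * g t := by
  rw [integral_comp_eq_integral_mul_of_map_eq_withDensity hX (hp.indicator measurableSet_Ici)
    (indicator_nonneg hp_nonneg) hX_law hg]
  simp_rw [← indicator_mul_left]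
  rw [integral_indicator measurableSet_Ici, integral_Ici_eq_integral_Ioi]

theorem integral_Ioi_mul_exp_neg_sq_div {v : ℝ} (hv : 0 < v) (s : ℝ) :
    ∫ t in Ioi s, t * exp (-t ^ 2 / (2 * v)) = v * exp (-s ^ 2 / (2 * v)) := by
  have hderiv : ∀ t ∈ Ici s, HasDerivAt (fun t => -v * exp (-t ^ 2 / (2 * v)))
      (t * exp (-t ^ 2 / (2 * v))) t := by
    intro t _
    have h : HasDerivAt (fun t => -t ^ 2 / (2 * v)) (-(2 * t) / (2 * v)) t := by
      simpa using (hasDerivAt_pow 2 t).neg.div_const (2 * v)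
    refine (h.exp.const_mul (-v)).congr_deriv ?_
    field_simp
  have hint : IntegrableOn (fun t => t * exp (-t ^ 2 / (2 * v))) (Ioi s) := by
    refine IntegrableOn.congr_fun
      (integrable_mul_exp_neg_mul_sq (inv_pos.2 (mul_pos two_pos hv))).integrableOn
      (fun t _ => ?_) measurableSet_Ioi
    ring_nf
  have hlim : Tendsto (fun t => -v * exp (-t ^ 2 / (2 * v))) atTop (nhds 0) := by
    simpa using (tendsto_exp_atBot.comp ((tendsto_neg_atTop_atBot.comp
      (tendsto_pow_atTop two_ne_zero)).atBot_div_const (mul_pos two_pos hv))).const_mul (-v)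
  rw [integral_Ioi_of_hasDerivAt_of_tendsto' hderiv hint hlim]
  ring

theorem integrableOn_sq_mul_exp_neg_sq_div {v : ℝ} (hv : 0 < v) :
    IntegrableOn (fun t => t ^ 2 * exp (-t ^ 2 / (2 * v))) (Ioi 0) := by
  refine (integrableOn_rpow_mul_exp_neg_mul_sq (inv_pos.2 (mul_pos two_pos hv))
    (by norm_num : (-1 : ℝ) < 2)).congr_fun (fun t _ => ?_) measurableSet_Ioi
  simp only [rpow_two]
  ring_nf

theorem integrable_indicator_Ioc_mul_deriv {w f : ℝ → ℝ} {K : NNReal}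
    (hw : IntegrableOn (fun t => t * w t) (Ioi 0)) (hf : LipschitzWith K f) :
    Integrable ({q : ℝ × ℝ | q.2 ∈ Ioc 0 q.1}.indicator fun q => w q.1 * deriv f q.2)
      ((volume.restrict (Ioi 0)).prod volume) := by
  set H : ℝ × ℝ → ℝ := {q : ℝ × ℝ | q.2 ∈ Ioc 0 q.1}.indicator fun q => w q.1 * deriv f q.2
  have hw_meas : AEStronglyMeasurable w (volume.restrict (Ioi 0)) := by
    refine (measurable_inv.aestronglyMeasurable.mul hw.aestronglyMeasurable).congr ?_
    filter_upwards [ae_restrict_mem measurableSet_Ioi] with t ht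
    exact inv_mul_cancel_left₀ ht.ne' (w t)
  have hH_meas : AEStronglyMeasurable H ((volume.restrict (Ioi 0)).prod volume) :=
    (hw_meas.comp_fst.mul (measurable_deriv f).aestronglyMeasurable.comp_snd).indicator
      ((measurableSet_lt measurable_const measurable_snd).inter
        (measurableSet_le measurable_snd measurable_fst))
  have hdom_int : ∀ t, Integrable ((Ioc 0 t).indicator fun _ => ‖w t‖ * K) :=
    fun t => (integrableOn_const measure_Ioc_lt_top.ne).integrable_indicator measurableSet_Ioc
  have hH_le : ∀ t s, ‖H (t, s)‖ ≤ (Ioc 0 t).indicator (fun _ => ‖w t‖ * K) s := by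
    intro t s
    rw [show H (t, s) = (Ioc 0 t).indicator (fun s => w t * deriv f s) s from rfl,
      norm_indicator_eq_indicator_norm]
    refine indicator_le_indicator ?_
    rw [norm_mul]
    gcongr
    exact norm_deriv_le_of_lipschitz hf
  have hH_sec : ∀ t, Integrable (fun s => H (t, s)) := fun t =>
    (hdom_int t).mono' (((measurable_deriv f).const_mul (w t)).indicator
      measurableSet_Ioc).aestronglyMeasurable (ae_of_all _ (hH_le t))
  refine (integrable_prod_iff hH_meas).2 ⟨ae_of_all _ hH_sec, (hw.norm.const_mul K).mono'
    hH_meas.norm.integral_prod_right' ?_⟩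
  filter_upwards [ae_restrict_mem measurableSet_Ioi] with t ht
  rw [norm_of_nonneg (integral_nonneg fun _ => norm_nonneg _)]
  calc ∫ s, ‖H (t, s)‖ ≤ ∫ s, (Ioc 0 t).indicator (fun _ => ‖w t‖ * K) s :=
        integral_mono (hH_sec t).norm (hdom_int t) (hH_le t)
    _ = K * ‖t * w t‖ := by
        rw [integral_indicator_const _ measurableSet_Ioc, Real.volume_real_Ioc_of_le ht.le,
          norm_mul, norm_of_nonneg ht.le, smul_eq_mul]
        ring

theorem integral_Ioi_mul_sub_eq_integral_Ioi_tail_mul_deriv {w f : ℝ → ℝ} {K : NNReal}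
    (hw : IntegrableOn (fun t => t * w t) (Ioi 0)) (hf : LipschitzWith K f) :
    ∫ t in Ioi 0, w t * (f t - f 0) = ∫ s in Ioi 0, (∫ t in Ioi s, w t) * deriv f s := by
  set H : ℝ × ℝ → ℝ := {q : ℝ × ℝ | q.2 ∈ Ioc 0 q.1}.indicator fun q => w q.1 * deriv f q.2
  have hL : ∀ t ∈ Ioi (0 : ℝ), ∫ s, H (t, s) = w t * (f t - f 0) := by
    intro t ht
    change ∫ s, (Ioc 0 t).indicator (fun s => w t * deriv f s) s = _
    rw [integral_indicator measurableSet_Ioc, integral_const_mul,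
      ← intervalIntegral.integral_of_le ht.le,
      hf.lipschitzOnWith.absolutelyContinuousOnInterval.integral_deriv_eq_sub]
  have hR : ∀ s, ∫ t in Ioi 0, H (t, s)
      = (Ioi 0).indicator (fun s => (∫ t in Ioi s, w t) * deriv f s) s := by
    intro s
    rcases lt_or_ge 0 s with hs | hs
    · have hH : ∀ t, H (t, s) = (Ici s).indicator (fun t => w t * deriv f s) t := fun t => by
        simp only [H, indicator_apply, mem_ofPred_eq, mem_Ioc, mem_Ici, hs, true_and]
      simp only [hH]
      rw [setIntegral_indicator measurableSet_Ici, inter_eq_right.2 (Ici_subset_Ioi.2 hs),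
        integral_mul_const, integral_Ici_eq_integral_Ioi, indicator_of_mem (mem_Ioi.2 hs)]
    · have hH : ∀ t, H (t, s) = 0 := fun t => by simp [H, not_lt.2 hs]
      simp [hH, indicator_of_notMem (show s ∉ Ioi 0 from not_lt.2 hs)]
  calc ∫ t in Ioi 0, w t * (f t - f 0) = ∫ t in Ioi 0, ∫ s, H (t, s) :=
        (setIntegral_congr_fun measurableSet_Ioi hL).symm
    _ = ∫ s, ∫ t in Ioi 0, H (t, s) :=
        integral_integral_swap (integrable_indicator_Ioc_mul_deriv hw hf)
    _ = _ := by simp_rw [hR]; exact integral_indicator measurableSet_Ioi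

theorem integral_Ioi_gaussian_stein_identity {v : ℝ} (hv : 0 < v) (c : ℝ) {K : NNReal}
    {f : ℝ → ℝ} (hf : LipschitzWith K f) :
    ∫ t in Ioi 0, c * exp (-t ^ 2 / (2 * v)) * (t * (f t - f 0))
      = v * ∫ t in Ioi 0, c * exp (-t ^ 2 / (2 * v)) * deriv f t := by
  set p : ℝ → ℝ := fun t => c * exp (-t ^ 2 / (2 * v))
  have htail : ∀ s, ∫ t in Ioi s, t * p t = v * p s := fun s => by
    simp_rw [p, mul_left_comm _ c]
    rw [integral_const_mul, integral_Ioi_mul_exp_neg_sq_div hv]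
  have hint : IntegrableOn (fun t => t * (t * p t)) (Ioi 0) :=
    IntegrableOn.congr_fun ((integrableOn_sq_mul_exp_neg_sq_div hv).const_mul c)
      (fun t _ => by ring) measurableSet_Ioi
  calc ∫ t in Ioi 0, p t * (t * (f t - f 0)) = ∫ t in Ioi 0, t * p t * (f t - f 0) := by
        simp_rw [mul_left_comm (p _), mul_assoc]
    _ = ∫ s in Ioi 0, (∫ t in Ioi s, t * p t) * deriv f s :=
        integral_Ioi_mul_sub_eq_integral_Ioi_tail_mul_deriv hint hf
    _ = v * ∫ s in Ioi 0, p s * deriv f s := by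
        simp_rw [htail, mul_assoc]
        exact integral_const_mul _ _

/-- If `X` has the half-normal distribution with parameter `σ² > 0` (the law of
`|Z|`, `Z ∼ N(0, σ²)`, with density `√(2/(πσ²)) exp(-t²/(2σ²))` on `[0,∞)`),
then `E[X²] = σ²` and for every Lipschitz `f : [0,∞) → ℝ` (realized as a
Lipschitz function on `ℝ`), `E[X²] E[f'(X)] = E[X (f(X) - f(0))]`. -/
theorem stmt_19 {Ω : Type*} [MeasurableSpace Ω] (P : Measure Ω) [IsProbabilityMeasure P]
    (σ2 : ℝ) (hσ2 : 0 < σ2) (X : Ω → ℝ) (hX_meas : Measurable X)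
    (hX_law : Measure.map X P = volume.withDensity (fun t => ENNReal.ofReal
      (Set.indicator (Set.Ici (0 : ℝ))
        (fun t => Real.sqrt (2 / (π * σ2)) * Real.exp (-t ^ 2 / (2 * σ2))) t))) :
    (∫ ω, (X ω) ^ 2 ∂P = σ2) ∧
      ∀ f : ℝ → ℝ, (∃ K : NNReal, LipschitzWith K f) →
        (∫ ω, (X ω) ^ 2 ∂P) * ∫ ω, deriv f (X ω) ∂P
          = ∫ ω, X ω * (f (X ω) - f 0) ∂P := by
  have hE : ∀ g : ℝ → ℝ, Measurable g →
      ∫ ω, g (X ω) ∂P = ∫ t in Ioi 0, √(2 / (π * σ2)) * exp (-t ^ 2 / (2 * σ2)) * g t :=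
    fun _ hg => integral_comp_eq_integral_Ioi_mul_of_map_eq_withDensity_indicator
      hX_meas (by fun_prop) (fun t _ => by positivity) hX_law hg
  have hstein : ∀ (K : NNReal) (f : ℝ → ℝ), LipschitzWith K f →
      ∫ ω, X ω * (f (X ω) - f 0) ∂P = σ2 * ∫ ω, deriv f (X ω) ∂P := by
    intro K f hf
    rw [hE (fun t => t * (f t - f 0)) (by have := hf.continuous; fun_prop),
      hE _ (measurable_deriv f)]
    exact integral_Ioi_gaussian_stein_identity hσ2 _ hf
  have hsecond : ∫ ω, X ω ^ 2 ∂P = σ2 := by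
    simpa [sq] using hstein 1 id LipschitzWith.id
  exact ⟨hsecond, fun f ⟨K, hf⟩ => by rw [hsecond, hstein K f hf]⟩
end
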